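/- For every positive integer n, E[ln W] = -γ + ∑_{j=1}^n (-1)^j C(n,j) ln j = -n c_n − γ, where W is the maximum of n i.i.d. Exponential(1) random variables. -/

import Mathlib

open Real MeasureTheory Finset

noncomputable def γ : ℝ := Real.eulerMascheroniConstant

/-!
Expanding `(1 - e^{-x})^{n-1}` binomially writes the density as
`∑_{j=1}^n (-1)^{j+1} C(n,j) j e^{-jx}`. Rescaling `∫ log t e^{-t} dt = Γ'(1) = -γ` gives
`∫ log x e^{-jx} dx = -(γ + log j)/j`, so the `j`-th term contributes
`(-1)^j C(n,j) (γ + log j)`, and the `γ` terms add up to `-γ` because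
`∑_{j=1}^n (-1)^j C(n,j) = -1`.
-/

theorem integral_log_mul_exp_neg : ∫ t in Set.Ioi (0 : ℝ), log t * exp (-t) = -γ := by
  have hGamma : HasDerivAt Complex.GammaIntegral (-(γ : ℂ)) 1 := by
    refine Complex.hasDerivAt_Gamma_one.congr_of_eventuallyEq ?_
    filter_upwards [(isOpen_lt continuous_const Complex.continuous_re).mem_nhds
      (by norm_num : (0 : ℝ) < (1 : ℂ).re)] with s hs
    exact (Complex.Gamma_eq_integral hs).symm
  have h := (Complex.hasDerivAt_GammaIntegral (by norm_num)).unique hGamma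
  simp only [sub_self, Complex.cpow_zero, one_mul, ← Complex.ofReal_mul] at h
  exact_mod_cast h

theorem integrableOn_log_mul_exp_neg : IntegrableOn (fun t => log t * exp (-t)) (Set.Ioi 0) := by
  -- the Bochner integral of a non-integrable function is `0`, while `γ ≠ 0`
  refine Integrable.of_integral_ne_zero ?_
  rw [integral_log_mul_exp_neg, neg_ne_zero]
  exact (one_half_pos.trans one_half_lt_eulerMascheroniConstant).ne'

theorem integrableOn_log_mul_exp_neg_mul {a : ℝ} (ha : 0 < a) :
    IntegrableOn (fun x => log x * exp (-(a * x))) (Set.Ioi 0) := by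
  have h := integrableOn_log_mul_exp_neg.sub ((integrableOn_exp_neg_Ioi 0).const_mul (log a))
  rw [← mul_zero a, ← integrableOn_Ioi_comp_mul_left_iff _ 0 ha] at h
  refine h.congr_fun (fun x hx => ?_) measurableSet_Ioi
  simp only [Pi.sub_apply, log_mul ha.ne' (ne_of_gt hx)]
  ring

theorem integral_log_mul_exp_neg_mul {a : ℝ} (ha : 0 < a) :
    ∫ x in Set.Ioi (0 : ℝ), log x * exp (-(a * x)) = -(γ + log a) / a := by
  have hlog : Set.EqOn (fun x => (log (a * x) - log a) * exp (-(a * x)))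
      (fun x => log x * exp (-(a * x))) (Set.Ioi 0) := fun x hx => by
    simp only [log_mul ha.ne' (ne_of_gt hx), add_sub_cancel_left]
  rw [← setIntegral_congr_fun measurableSet_Ioi hlog,
    integral_comp_mul_left_Ioi (fun t => (log t - log a) * exp (-t)) 0 ha, mul_zero]
  simp only [sub_mul]
  rw [integral_sub integrableOn_log_mul_exp_neg ((integrableOn_exp_neg_Ioi 0).const_mul _),
    integral_const_mul, integral_log_mul_exp_neg, integral_exp_neg_Ioi_zero, smul_eq_mul]
  field_simp
  ring

theorem sum_Icc_one_eq_sum_range {M : Type*} [AddCommMonoid M] (f : ℕ → M) (n : ℕ) :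
    ∑ j ∈ Icc 1 n, f j = ∑ k ∈ range n, f (k + 1) := by
  rw [range_eq_Ico, sum_Ico_add' f 0 n 1, zero_add, Ico_add_one_right_eq_Icc]

theorem mul_mul_one_sub_pow_pred_eq_sum {R : Type*} [CommRing R] (n : ℕ) (y : R) :
    n * y * (1 - y) ^ (n - 1) = ∑ j ∈ Icc 1 n, (-1) ^ (j + 1) * n.choose j * j * y ^ j := by
  cases n with
  | zero => simp
  | succ m =>
    rw [Nat.add_sub_cancel, sum_Icc_one_eq_sum_range, sub_eq_neg_add, add_pow, mul_sum]
    refine sum_congr rfl fun k _ => ?_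
    have hchoose : ((m + 1 : ℕ) : R) * m.choose k = (m + 1).choose (k + 1) * (k + 1 : ℕ) := by
      rw [← Nat.cast_mul, ← Nat.cast_mul, Nat.add_one_mul_choose_eq]
    rw [one_pow, mul_one, neg_pow]
    linear_combination (-1) ^ k * y ^ (k + 1) * hchoose

theorem sum_Icc_one_neg_one_pow_mul_choose {R : Type*} [Ring R] {n : ℕ} (hn : n ≠ 0) :
    ∑ j ∈ Icc 1 n, (-1 : R) ^ j * n.choose j = -1 := by
  have h : ∑ j ∈ range (n + 1), (-1 : R) ^ j * n.choose j = 0 := by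
    exact_mod_cast congrArg (Int.cast : ℤ → R) (Int.alternating_sum_range_choose_of_ne hn)
  rw [sum_range_succ'] at h
  rw [sum_Icc_one_eq_sum_range (fun j => (-1 : R) ^ j * n.choose j)]
  simpa using eq_neg_of_add_eq_zero_left h

theorem integral_log_mul_max_exp_density {n : ℕ} (hn : n ≠ 0) :
    ∫ x in Set.Ioi (0 : ℝ), log x * (n * exp (-x) * (1 - exp (-x)) ^ (n - 1))
      = -γ + ∑ j ∈ Icc 1 n, (-1 : ℝ) ^ j * n.choose j * log j := by
  have hexpand : ∀ x : ℝ, log x * (n * exp (-x) * (1 - exp (-x)) ^ (n - 1))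
      = ∑ j ∈ Icc 1 n, (-1) ^ (j + 1) * n.choose j * j * (log x * exp (-(j * x))) := by
    intro x
    rw [mul_mul_one_sub_pow_pred_eq_sum, mul_sum]
    refine sum_congr rfl fun j _ => ?_
    rw [← exp_nat_mul, mul_neg]
    ring
  have hpos : ∀ j ∈ Icc 1 n, (0 : ℝ) < j := fun j hj => by exact_mod_cast (mem_Icc.mp hj).1
  have hterm : ∀ j ∈ Icc 1 n,
      ∫ x in Set.Ioi (0 : ℝ), (-1) ^ (j + 1) * n.choose j * j * (log x * exp (-(j * x)))
        = (-1) ^ j * n.choose j * γ + (-1) ^ j * n.choose j * log j := by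
    intro j hj
    have hj0 := (hpos j hj).ne'
    rw [integral_const_mul, integral_log_mul_exp_neg_mul (hpos j hj), pow_succ]
    field_simp
  simp_rw [hexpand]
  rw [integral_finsetSum _ fun j hj => (integrableOn_log_mul_exp_neg_mul (hpos j hj)).const_mul _,
    sum_congr rfl hterm, sum_add_distrib, ← sum_mul, sum_Icc_one_neg_one_pow_mul_choose hn]
  ring

theorem stmt11 (n : ℕ) (hn : 1 ≤ n)
    (c : ℝ)
    (hc : c = -(1 / (n : ℝ)) * ∑ j ∈ Finset.Icc 1 n, (-1 : ℝ) ^ j * (n.choose j : ℝ) * Real.log j) :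
    (∫ x in Set.Ioi (0:ℝ), Real.log x * ((n : ℝ) * Real.exp (-x) * (1 - Real.exp (-x)) ^ (n - 1)))
      = -γ + ∑ j ∈ Finset.Icc 1 n, (-1 : ℝ) ^ j * (n.choose j : ℝ) * Real.log j ∧
    (∫ x in Set.Ioi (0:ℝ), Real.log x * ((n : ℝ) * Real.exp (-x) * (1 - Real.exp (-x)) ^ (n - 1)))
      = -(n : ℝ) * c - γ := by
  have h := integral_log_mul_max_exp_density (Nat.one_le_iff_ne_zero.mp hn)
  refine ⟨h, ?_⟩
  rw [h, hc]
  field_simp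
  ring
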